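/- Let f : [a,b] → 𝔽 and define h : [a,b] → 𝔽 by h(t) = f(t)·Δg(t). Let D₁ = {t ∈ [a,b] ∩ N_g⁻ : t is an accumulation point of D_g ∩ [a,t)}, D₂ = {t ∈ [a,b] ∩ N_g⁺ : t is an accumulation point of D_g ∩ (t,b]}, D₃ = {t ∈ [a,b] \ (N_g ∪ D_g) : t is an accumulation point of D_g ∩ [a,b]}. For t ∈ [a,b]: (1) if t* ∈ D₁ ∪ D₂ ∪ D₃, then h is g-differentiable at t if and only if lim_{s→t*, s∈D_g} f(s)Δg(s)/(g(s) − g(t)) = 0 (the limit being the appropriate one-sided limit matching the definition of the Stieltjes derivative at t*); (2) if t* ∈ D_g and t* is an accumulation point of D_g ∩ (t,b], then h is g-differentiable at t if and only if lim_{s→t*⁺, s∈D_g} f(s)Δg(s) = 0; (3) in any other case, h is g-differentiable at t. Moreover, whenever h is g-differentiable at t, h'_g(t) = −f(t*)·χ_{D_g}(t*), where χ_{D_g} is the indicator function of D_g. -/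

import Mathlib

open Set Filter Topology
open scoped Classical

noncomputable section

/-- The right-hand limit `g(t⁺)` of a nondecreasing function `g`. -/
def rLim (g : ℝ → ℝ) (t : ℝ) : ℝ := sInf (g '' Set.Ioi t)

/-- `Δg(t) = g(t⁺) − g(t)`. -/
def jump (g : ℝ → ℝ) (t : ℝ) : ℝ := rLim g t - g t

/-- `C_g`: the set of points near which `g` is constant. -/
def Cset (g : ℝ → ℝ) : Set ℝ :=
  {t | ∃ ε > 0, ∀ u ∈ Set.Ioo (t - ε) (t + ε), g u = g t}

/-- `D_g`: the set of discontinuity points of `g`. -/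
def Dset (g : ℝ → ℝ) : Set ℝ := {t | 0 < jump g t}

/-- The right endpoints `b_n` of the connected components of the open set `C_g`. -/
def rightEndpoints (g : ℝ → ℝ) : Set ℝ :=
  {x | x ∉ Cset g ∧ ∃ s, s < x ∧ Set.Ioo s x ⊆ Cset g}

/-- The left endpoints `a_n` of the connected components of the open set `C_g`. -/
def leftEndpoints (g : ℝ → ℝ) : Set ℝ :=
  {x | x ∉ Cset g ∧ ∃ s, x < s ∧ Set.Ioo x s ⊆ Cset g}

/-- `N_g⁻ = {a_n : n ∈ Λ} \ D_g`. -/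
def Nminus (g : ℝ → ℝ) : Set ℝ := leftEndpoints g \ Dset g

/-- `N_g⁺ = {b_n : n ∈ Λ} \ D_g`. -/
def Nplus (g : ℝ → ℝ) : Set ℝ := rightEndpoints g \ Dset g

/-- `N_g = N_g⁻ ∪ N_g⁺`. -/
def Nset (g : ℝ → ℝ) : Set ℝ := Nminus g ∪ Nplus g

/-- `t* = t` if `t ∉ C_g`, and `t* = b_n` (the right endpoint of the connected component
`(a_n, b_n)` of `C_g` containing `t`) if `t ∈ C_g`. -/
def tstar (g : ℝ → ℝ) (t : ℝ) : ℝ :=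
  if t ∈ Cset g then sSup (connectedComponentIn (Cset g) t) else t

/-- The filter along which the Stieltjes difference quotient is taken at a point of `[a,b]`:
from the right at points of `D_g ∪ N_g⁺ ∪ {a}`, from the left at points of `N_g⁻ ∪ {b}`,
two-sided otherwise. -/
def sFilter (g : ℝ → ℝ) (a b t : ℝ) : Filter ℝ :=
  if t ∈ Dset g ∨ t ∈ Nplus g ∨ t = a then 𝓝[Set.Ioi t ∩ Set.Icc a b] t
  else if t ∈ Nminus g ∨ t = b then 𝓝[Set.Iio t ∩ Set.Icc a b] t
  else 𝓝[Set.Icc a b \ {t}] t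

/-- `f` has Stieltjes derivative (`g`-derivative) `L` at `t`, relative to `[a,b]`. -/
def HasSDerivAt {K : Type*} [RCLike K] (g : ℝ → ℝ) (a b : ℝ) (f : ℝ → K) (t : ℝ) (L : K) :
    Prop :=
  Filter.Tendsto (fun s => (g s - g (tstar g t))⁻¹ • (f s - f (tstar g t)))
    (sFilter g a b (tstar g t)) (𝓝 L)

/-- `f` is `g`-differentiable at `t`, relative to `[a,b]`. -/
def SDiffAt {K : Type*} [RCLike K] (g : ℝ → ℝ) (a b : ℝ) (f : ℝ → K) (t : ℝ) : Prop :=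
  ∃ L, HasSDerivAt g a b f t L

/-- `f` is `g`-continuous at `t` relative to the domain `D`. -/
def GContAt {K : Type*} [RCLike K] (g : ℝ → ℝ) (f : ℝ → K) (D : Set ℝ) (t : ℝ) : Prop :=
  ∀ ε > 0, ∃ δ > 0, ∀ s ∈ D, |g t - g s| < δ → ‖f t - f s‖ < ε

/-- `D₁`: points of `[a,b] ∩ N_g⁻` accumulating `D_g ∩ [a,t)`. -/
def D1 (g : ℝ → ℝ) (a b : ℝ) : Set ℝ :=
  {x | x ∈ Set.Icc a b ∩ Nminus g ∧ AccPt x (𝓟 (Dset g ∩ Set.Ico a x))}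

/-- `D₂`: points of `[a,b] ∩ N_g⁺` accumulating `D_g ∩ (t,b]`. -/
def D2 (g : ℝ → ℝ) (a b : ℝ) : Set ℝ :=
  {x | x ∈ Set.Icc a b ∩ Nplus g ∧ AccPt x (𝓟 (Dset g ∩ Set.Ioc x b))}

/-- `D₃`: points of `[a,b] \ (N_g ∪ D_g)` accumulating `D_g ∩ [a,b]`. -/
def D3 (g : ℝ → ℝ) (a b : ℝ) : Set ℝ :=
  {x | x ∈ Set.Icc a b \ (Nset g ∪ Dset g) ∧ AccPt x (𝓟 (Dset g ∩ Set.Icc a b))}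

/-- `D̃₁`: points of `[a,b] ∩ N_g⁻` not accumulating `D_g ∩ [a,t)`. -/
def Dt1 (g : ℝ → ℝ) (a b : ℝ) : Set ℝ :=
  {x | x ∈ Set.Icc a b ∩ Nminus g ∧ ¬ AccPt x (𝓟 (Dset g ∩ Set.Ico a x))}

/-- `D̃₂`: points of `[a,b] ∩ (N_g⁺ ∪ D_g)` not accumulating `D_g ∩ (t,b]`. -/
def Dt2 (g : ℝ → ℝ) (a b : ℝ) : Set ℝ :=
  {x | x ∈ Set.Icc a b ∩ (Nplus g ∪ Dset g) ∧ ¬ AccPt x (𝓟 (Dset g ∩ Set.Ioc x b))}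

/-- `D̃₃`: points of `[a,b] \ (C_g ∪ N_g ∪ D_g)` not accumulating `D_g ∩ [a,b]`. -/
def Dt3 (g : ℝ → ℝ) (a b : ℝ) : Set ℝ :=
  {x | x ∈ Set.Icc a b \ (Cset g ∪ Nset g ∪ Dset g) ∧ ¬ AccPt x (𝓟 (Dset g ∩ Set.Icc a b))}

/-- `C₁`: points of `[a,b] ∩ N_g⁻` accumulating `C_g ∩ [a,t)`. -/
def C1 (g : ℝ → ℝ) (a b : ℝ) : Set ℝ :=
  {x | x ∈ Set.Icc a b ∩ Nminus g ∧ AccPt x (𝓟 (Cset g ∩ Set.Ico a x))}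

/-- `C₂`: points of `[a,b] ∩ (N_g⁺ ∪ D_g)` accumulating `C_g ∩ (t,b]`. -/
def C2 (g : ℝ → ℝ) (a b : ℝ) : Set ℝ :=
  {x | x ∈ Set.Icc a b ∩ (Nplus g ∪ Dset g) ∧ AccPt x (𝓟 (Cset g ∩ Set.Ioc x b))}

/-- `C₃`: points of `[a,b] \ (C_g ∪ N_g ∪ D_g)` accumulating `C_g ∩ [a,b]`. -/
def C3 (g : ℝ → ℝ) (a b : ℝ) : Set ℝ :=
  {x | x ∈ Set.Icc a b \ (Cset g ∪ Nset g ∪ Dset g) ∧ AccPt x (𝓟 (Cset g ∩ Set.Icc a b))}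

/-- `A_g = {t : sup{s ∈ [a,b] : g(s) = g(t)} ∈ D_g}`. -/
def Ag (g : ℝ → ℝ) (a b : ℝ) : Set ℝ :=
  {t | sSup {s | s ∈ Set.Icc a b ∧ g s = g t} ∈ Dset g}

/-- `H_g`: points lying in some `(s₁, s₂]` with `s₁, s₂ ∈ D_g` and `(s₁, s₂) ⊆ C_g`. -/
def Hg (g : ℝ → ℝ) : Set ℝ :=
  {t | ∃ s₁ ∈ Dset g, ∃ s₂ ∈ Dset g, t ∈ Set.Ioc s₁ s₂ ∧ Set.Ioo s₁ s₂ ⊆ Cset g}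

/-- Membership in `BC_g([a,b], K)`: bounded and `g`-continuous on `[a,b]`. -/
def MemBCg {K : Type*} [RCLike K] (g : ℝ → ℝ) (a b : ℝ) (f : ℝ → K) : Prop :=
  (∃ M, ∀ s ∈ Set.Icc a b, ‖f s‖ ≤ M) ∧ ∀ s ∈ Set.Icc a b, GContAt g f (Set.Icc a b) s

/-- Membership in `BC¹_g([a,b], K)`. -/
def MemBC1g {K : Type*} [RCLike K] (g : ℝ → ℝ) (a b : ℝ) (f : ℝ → K) : Prop :=
  MemBCg g a b f ∧
    ∃ f' : ℝ → K, (∀ s ∈ Set.Icc a b, HasSDerivAt g a b f s (f' s)) ∧ MemBCg g a b f'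

/-! Put `x = t*`, so that `g x = g t`. The function `h = Δg • f` vanishes off the countable set
`D_g`, whose complement is dense, so the filter defining the `g`-derivative at `x` still sees
points `s ∉ D_g`. There the difference quotient is `-(g s - g x)⁻¹ • h x`, which tends to
`-χ_{D_g}(x) • f x`; this pins down the derivative. If `x ∉ D_g`, then `h x = 0` and the
quotient is `(g s - g t)⁻¹ • h s`, which gives (1). If `x ∈ D_g`, then `g s - g x → Δg(x) > 0`,
so the quotient converges iff `h` does, and any limit of `h` must be `0`; this gives (2). In the
remaining cases `D_g` is eventually avoided and the quotient converges outright. -/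

section Topology

variable {X : Type*} [TopologicalSpace X]

lemma nhdsWithin_inf_principal_neBot_of_dense {s E : Set X} {x : X} (hs : IsOpen s)
    (hx : x ∈ closure s) (hE : Dense E) : (𝓝[s] x ⊓ 𝓟 E).NeBot := by
  rw [← nhdsWithin_inter', ← mem_closure_iff_nhdsWithin_neBot]
  exact closure_minimal (hE.open_subset_closure_inter hs) isClosed_closure hx

lemma eventually_notMem_of_not_accPt {F : Filter X} {x : X} {S T : Set X} (hF : F ≤ 𝓝[≠] x)
    (hT : T ∈ F) (h : ¬AccPt x (𝓟 (S ∩ T))) : ∀ᶠ s in F, s ∉ S := by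
  rw [AccPt, not_neBot, inf_principal_eq_bot] at h
  filter_upwards [hF h, hT] with s hs hsT hsS using hs ⟨hsS, hsT⟩

end Topology

variable {g : ℝ → ℝ} {a b t x : ℝ}

lemma jump_nonneg (hg : Monotone g) (x : ℝ) : 0 ≤ jump g x :=
  sub_nonneg.2 <| ge_of_tendsto (hg.tendsto_nhdsGT x)
    (eventually_nhdsWithin_of_forall fun _ hs => hg (le_of_lt hs))

lemma jump_eq_zero_of_notMem_Dset (hg : Monotone g) (hx : x ∉ Dset g) : jump g x = 0 :=
  le_antisymm (not_lt.1 hx) (jump_nonneg hg x)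

lemma jump_pos_of_mem_Dset (hx : x ∈ Dset g) : 0 < jump g x := hx

lemma countable_Dset (hg : Monotone g) : (Dset g).Countable := by
  refine Set.Countable.mono (s₂ := {x | ¬ContinuousAt g x}) ?_ hg.countable_not_continuousAt
  intro x hx hcont
  exact (jump_pos_of_mem_Dset hx).ne' <| sub_eq_zero.2 <| tendsto_nhds_unique
    (hg.tendsto_nhdsGT x) (ContinuousAt.tendsto hcont |>.mono_left nhdsWithin_le_nhds)

lemma mem_Cset_iff : t ∈ Cset g ↔ ∀ᶠ u in 𝓝 t, g u = g t := by
  simp only [Cset, mem_ofPred_eq, Metric.eventually_nhds_iff_ball, Real.ball_eq_Ioo]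

lemma isOpen_Cset : IsOpen (Cset g) := by
  refine isOpen_iff_mem_nhds.2 fun t ht => ?_
  filter_upwards [(mem_Cset_iff.1 ht).eventually_nhds] with u hu
  exact mem_Cset_iff.2 (hu.mono fun v hv => hv.trans hu.self_of_nhds.symm)

lemma hasDerivAt_zero_of_mem_Cset (ht : t ∈ Cset g) : HasDerivAt g 0 t :=
  (hasDerivAt_const t (g t)).congr_of_eventuallyEq (mem_Cset_iff.1 ht)

lemma eq_of_mem_connectedComponentIn_Cset {u : ℝ} (hu : u ∈ connectedComponentIn (Cset g) t) :
    g u = g t := by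
  have ht : t ∈ Cset g := connectedComponentIn_nonempty_iff.1 ⟨u, hu⟩
  have hC : ∀ v ∈ connectedComponentIn (Cset g) t, HasDerivAt g 0 v := fun v hv =>
    hasDerivAt_zero_of_mem_Cset (connectedComponentIn_subset _ _ hv)
  exact isOpen_Cset.connectedComponentIn.is_const_of_deriv_eq_zero
    isPreconnected_connectedComponentIn
    (fun v hv => (hC v hv).differentiableAt.differentiableWithinAt) (fun v hv => (hC v hv).deriv)
    hu (mem_connectedComponentIn ht)

/-- Left-continuity of `g` carries its constant value on the component of `C_g` through `t`
over to the supremum `t*` of that component. -/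
lemma tstar_mem_Icc_and_eq (hlc : ∀ x : ℝ, ContinuousWithinAt g (Iio x) x) (htb : t ≤ b)
    (hbC : b ∉ Cset g) : tstar g t ∈ Icc t b ∧ g (tstar g t) = g t := by
  unfold tstar
  split_ifs with ht
  swap
  · exact ⟨⟨le_rfl, htb⟩, rfl⟩
  set comp := connectedComponentIn (Cset g) t
  have htc : t ∈ comp := mem_connectedComponentIn ht
  have hoc : comp.OrdConnected := isPreconnected_connectedComponentIn.ordConnected
  have hcb : comp ⊆ Iic b := fun y hy => not_lt.1 fun hby =>
    hbC (connectedComponentIn_subset _ _ (hoc.out htc hy ⟨htb, hby.le⟩))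
  obtain ⟨u, htu, huc⟩ :=
    Filter.Eventually.exists_gt (p := (· ∈ comp)) <|
      isOpen_Cset.connectedComponentIn.mem_nhds htc
  have htm : t < sSup comp := htu.trans_le (le_csSup ⟨b, hcb⟩ huc)
  have hIoo : Ioo t (sSup comp) ⊆ comp := fun u hu => by
    obtain ⟨v, hv, huv⟩ := exists_lt_of_lt_csSup ⟨t, htc⟩ hu.2
    exact hoc.out htc hv ⟨hu.1.le, huv.le⟩
  have hconst : (fun _ => g t) =ᶠ[𝓝[<] sSup comp] g :=
    mem_of_superset (Ioo_mem_nhdsLT htm) fun s hs =>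
      (eq_of_mem_connectedComponentIn_Cset (hIoo hs)).symm
  exact ⟨⟨htm.le, csSup_le ⟨t, htc⟩ hcb⟩,
    tendsto_nhds_unique (hlc _) (tendsto_const_nhds.congr' hconst)⟩

lemma sFilter_le_nhdsNE : sFilter g a b x ≤ 𝓝[≠] x := by
  unfold sFilter
  split_ifs
  · exact nhdsWithin_mono _ fun s hs => hs.1.ne'
  · exact nhdsWithin_mono _ fun s hs => hs.1.ne
  · exact nhdsWithin_mono _ fun s hs => hs.2

lemma Icc_mem_sFilter : Icc a b ∈ sFilter g a b x := by
  unfold sFilter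
  split_ifs
  · exact mem_of_superset self_mem_nhdsWithin inter_subset_right
  · exact mem_of_superset self_mem_nhdsWithin inter_subset_right
  · exact mem_of_superset self_mem_nhdsWithin sdiff_subset

lemma Ioc_mem_sFilter (hx : x ∈ Dset g ∨ x ∈ Nplus g) : Ioc x b ∈ sFilter g a b x := by
  rw [sFilter, if_pos (hx.imp_right Or.inl)]
  exact mem_of_superset self_mem_nhdsWithin fun s hs => ⟨hs.1, hs.2.2⟩

lemma Ico_mem_sFilter (hxD : x ∉ Dset g) (hxN : x ∉ Nplus g) (hxa : x ≠ a)
    (hx : x ∈ Nminus g) : Ico a x ∈ sFilter g a b x := by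
  rw [sFilter, if_neg (by tauto), if_pos (Or.inl hx)]
  exact mem_of_superset self_mem_nhdsWithin fun s hs => ⟨hs.2.1, hs.1⟩

lemma sFilter_inf_principal_neBot (hab : a < b) (ha : a ∉ Nminus g) (hbD : b ∉ Dset g)
    (hbN : b ∉ Nplus g) (hx : x ∈ Icc a b) {E : Set ℝ} (hE : Dense E) :
    (sFilter g a b x ⊓ 𝓟 E).NeBot := by
  have hGT : (𝓝[>] x ⊓ 𝓟 E).NeBot :=
    nhdsWithin_inf_principal_neBot_of_dense isOpen_Ioi (by simp) hE
  have hLT : (𝓝[<] x ⊓ 𝓟 E).NeBot :=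
    nhdsWithin_inf_principal_neBot_of_dense isOpen_Iio (by simp) hE
  unfold sFilter
  split_ifs with hright hleft
  · have hxb : x < b := hx.2.lt_of_ne <| by
      rintro rfl
      rcases hright with h | h | h
      exacts [hbD h, hbN h, hab.ne' h]
    exact hGT.mono <| inf_le_inf_right _ <| nhdsWithin_le_of_mem <|
      inter_mem self_mem_nhdsWithin (Icc_mem_nhdsGT_of_mem ⟨hx.1, hxb⟩)
  · have hax : a < x := hx.1.lt_of_ne <| by
      rintro rfl
      rcases hleft with h | h
      exacts [ha h, hab.ne h]
    exact hLT.mono <| inf_le_inf_right _ <| nhdsWithin_le_of_mem <|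
      inter_mem self_mem_nhdsWithin (Icc_mem_nhdsLT_of_mem ⟨hax, hx.2⟩)
  · have hxb : x < b := hx.2.lt_of_ne fun h => hleft (Or.inr h)
    exact hGT.mono <| inf_le_inf_right _ <| nhdsWithin_le_of_mem <|
      mem_of_superset (inter_mem self_mem_nhdsWithin (Icc_mem_nhdsGT_of_mem ⟨hx.1, hxb⟩))
        fun s hs => ⟨hs.2, hs.1.ne'⟩

lemma notMem_Dset_of_mem_D123 (hx : x ∈ D1 g a b ∪ D2 g a b ∪ D3 g a b) : x ∉ Dset g := by
  rcases hx with (h | h) | h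
  exacts [h.1.2.2, h.1.2.2, fun hD => h.1.2 (Or.inr hD)]

lemma eventually_notMem_Dset_sFilter (ha : a ∉ Nminus g) (hx : x ∈ Icc a b) (htx : t ≤ x)
    (h123 : x ∉ D1 g a b ∪ D2 g a b ∪ D3 g a b)
    (hacc : ¬(x ∈ Dset g ∧ AccPt x (𝓟 (Dset g ∩ Ioc t b)))) :
    ∀ᶠ s in sFilter g a b x, s ∉ Dset g := by
  have avoid := fun {T : Set ℝ} => eventually_notMem_of_not_accPt (S := Dset g) (T := T)
    (sFilter_le_nhdsNE (g := g) (a := a) (b := b) (x := x))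
  by_cases hxD : x ∈ Dset g
  · exact avoid (mem_of_superset (Ioc_mem_sFilter (Or.inl hxD)) (Ioc_subset_Ioc_left htx))
      fun h => hacc ⟨hxD, h⟩
  by_cases hxN : x ∈ Nplus g
  · exact avoid (Ioc_mem_sFilter (Or.inr hxN))
      fun h => h123 (Or.inl (Or.inr ⟨⟨hx, hxN⟩, h⟩))
  by_cases hxM : x ∈ Nminus g
  · exact avoid (Ico_mem_sFilter hxD hxN (by rintro rfl; exact ha hxM) hxM)
      fun h => h123 (Or.inl (Or.inl ⟨⟨hx, hxM⟩, h⟩))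
  · exact avoid Icc_mem_sFilter fun h => h123 (Or.inr ⟨⟨hx, by simp [Nset, *]⟩, h⟩)

lemma tendsto_sub_sFilter (hg : Monotone g) (hx : x ∈ Dset g) :
    Tendsto (fun s => g s - g x) (sFilter g a b x) (𝓝 (jump g x)) := by
  rw [sFilter, if_pos (Or.inl hx)]
  exact ((hg.tendsto_nhdsGT x).mono_left (nhdsWithin_mono _ inter_subset_left)).sub_const (g x)

section Quotient

variable {K : Type*} [RCLike K]

lemma tendsto_quotient_of_eventually_notMem_Dset (hg : Monotone g) {l : Filter ℝ}
    (hl : l ≤ sFilter g a b x) (hev : ∀ᶠ s in l, s ∉ Dset g) (f : ℝ → K) :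
    Tendsto (fun s => (g s - g x)⁻¹ • (jump g s • f s - jump g x • f x)) l
      (𝓝 (-(indicator (Dset g) (fun _ => (1 : ℝ)) x) • f x)) := by
  refine Tendsto.congr' (f₁ := fun s => (g s - g x)⁻¹ • -(jump g x • f x))
    (hev.mono fun s hs => ?_) ?_
  · simp only [jump_eq_zero_of_notMem_Dset hg hs, zero_smul, zero_sub]
  by_cases hxD : x ∈ Dset g
  · have hpos := jump_pos_of_mem_Dset hxD
    convert (((tendsto_sub_sFilter hg hxD).mono_left hl).inv₀ hpos.ne').smul_const
      (-(jump g x • f x)) using 2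
    rw [indicator_of_mem hxD, smul_neg, smul_smul, inv_mul_cancel₀ hpos.ne', neg_smul]
  · simpa [jump_eq_zero_of_notMem_Dset hg hxD, indicator_of_notMem hxD] using tendsto_const_nhds

variable [(sFilter g a b x ⊓ 𝓟 (Dset g)ᶜ).NeBot]

lemma eq_of_tendsto_quotient (hg : Monotone g) {f : ℝ → K} {L : K}
    (hL : Tendsto (fun s => (g s - g x)⁻¹ • (jump g s • f s - jump g x • f x))
      (sFilter g a b x) (𝓝 L)) :
    L = -(indicator (Dset g) (fun _ => (1 : ℝ)) x) • f x :=
  tendsto_nhds_unique (hL.mono_left inf_le_left) <|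
    tendsto_quotient_of_eventually_notMem_Dset hg inf_le_left
      (mem_inf_of_right (mem_principal_self _)) f

lemma exists_tendsto_quotient_iff_of_notMem_Dset (hg : Monotone g) (hxD : x ∉ Dset g)
    (f : ℝ → K) :
    (∃ L, Tendsto (fun s => (g s - g x)⁻¹ • (jump g s • f s - jump g x • f x))
      (sFilter g a b x) (𝓝 L)) ↔
    Tendsto (fun s => (g s - g x)⁻¹ • (jump g s • f s))
      (sFilter g a b x ⊓ 𝓟 (Dset g)) (𝓝 0) := by
  have hQ : (fun s => (g s - g x)⁻¹ • (jump g s • f s - jump g x • f x)) =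
      fun s => (g s - g x)⁻¹ • (jump g s • f s) := by
    simp [jump_eq_zero_of_notMem_Dset hg hxD]
  rw [tendsto_inf_principal_nhds_iff_of_forall_eq fun s hs => by
    simp [jump_eq_zero_of_notMem_Dset hg hs], ← hQ]
  refine ⟨fun ⟨L, hL⟩ => ?_, fun h => ⟨0, h⟩⟩
  obtain rfl : L = 0 := by
    simpa [indicator_of_notMem hxD] using eq_of_tendsto_quotient hg hL
  exact hL

lemma exists_tendsto_quotient_iff_of_mem_Dset (hg : Monotone g) (hxD : x ∈ Dset g)
    (f : ℝ → K) :
    (∃ L, Tendsto (fun s => (g s - g x)⁻¹ • (jump g s • f s - jump g x • f x))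
      (sFilter g a b x) (𝓝 L)) ↔
    Tendsto (fun s => jump g s • f s) (sFilter g a b x ⊓ 𝓟 (Dset g)) (𝓝 0) := by
  have hpos := jump_pos_of_mem_Dset hxD
  have hφ := tendsto_sub_sFilter (a := a) (b := b) hg hxD
  rw [tendsto_inf_principal_nhds_iff_of_forall_eq fun s hs => by
    simp [jump_eq_zero_of_notMem_Dset hg hs]]
  constructor
  · rintro ⟨L, hL⟩
    have hh : Tendsto (fun s => jump g s • f s) (sFilter g a b x)
        (𝓝 (jump g x • L + jump g x • f x)) := by
      refine ((hφ.smul hL).add_const (jump g x • f x)).congr' ?_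
      filter_upwards [hφ.eventually_ne hpos.ne'] with s hs
      rw [smul_inv_smul₀ hs, sub_add_cancel]
    have h0 : Tendsto (fun s => jump g s • f s) (sFilter g a b x ⊓ 𝓟 (Dset g)ᶜ) (𝓝 0) :=
      tendsto_const_nhds.congr' <| mem_inf_of_right <| mem_principal.2 fun s hs => by
        simp [jump_eq_zero_of_notMem_Dset hg hs]
    rwa [tendsto_nhds_unique (hh.mono_left inf_le_left) h0] at hh
  · intro h
    refine ⟨-f x, ?_⟩
    convert ((hφ.inv₀ hpos.ne').smul h).sub ((hφ.inv₀ hpos.ne').smul_const (jump g x • f x))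
      using 2
    · rw [smul_sub]
    · rw [smul_zero, zero_sub, smul_smul, inv_mul_cancel₀ hpos.ne', one_smul]

end Quotient

/-- `g`-differentiability of `h = f·Δg`, with the value of the derivative. -/
theorem stmt6 {K : Type*} [RCLike K] (g : ℝ → ℝ) (hg : Monotone g)
    (hlc : ∀ x : ℝ, ContinuousWithinAt g (Set.Iio x) x)
    (a b : ℝ) (hab : a < b) (ha : a ∉ Nminus g)
    (hb : b ∉ Dset g ∪ Cset g ∪ Nplus g)
    (f : ℝ → K) (t : ℝ) (ht : t ∈ Set.Icc a b) :
    (tstar g t ∈ D1 g a b ∪ D2 g a b ∪ D3 g a b →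
      (SDiffAt g a b (fun s => jump g s • f s) t ↔
        Filter.Tendsto (fun s => (g s - g t)⁻¹ • (jump g s • f s))
          (sFilter g a b (tstar g t) ⊓ 𝓟 (Dset g)) (𝓝 (0 : K)))) ∧
    (tstar g t ∈ Dset g → AccPt (tstar g t) (𝓟 (Dset g ∩ Set.Ioc t b)) →
      (SDiffAt g a b (fun s => jump g s • f s) t ↔
        Filter.Tendsto (fun s => jump g s • f s)
          (sFilter g a b (tstar g t) ⊓ 𝓟 (Dset g)) (𝓝 (0 : K)))) ∧
    (tstar g t ∉ D1 g a b ∪ D2 g a b ∪ D3 g a b →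
      ¬ (tstar g t ∈ Dset g ∧ AccPt (tstar g t) (𝓟 (Dset g ∩ Set.Ioc t b))) →
      SDiffAt g a b (fun s => jump g s • f s) t) ∧
    (∀ L : K, HasSDerivAt g a b (fun s => jump g s • f s) t L →
      L = -(Set.indicator (Dset g) (fun _ => (1 : ℝ)) (tstar g t)) • f (tstar g t)) := by
  simp only [SDiffAt, HasSDerivAt]
  have hbC : b ∉ Cset g := fun h => hb (Or.inl (Or.inr h))
  obtain ⟨htx, hgx⟩ := tstar_mem_Icc_and_eq hlc ht.2 hbC
  set x := tstar g t
  have hx : x ∈ Icc a b := ⟨ht.1.trans htx.1, htx.2⟩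
  have : (sFilter g a b x ⊓ 𝓟 (Dset g)ᶜ).NeBot :=
    sFilter_inf_principal_neBot hab ha (fun h => hb (Or.inl (Or.inl h))) (fun h => hb (Or.inr h))
      hx ((countable_Dset hg).dense_compl ℝ)
  refine ⟨fun h123 => ?_, fun hxD _ => ?_, fun h123 hacc => ?_, fun L hL => ?_⟩
  · rw [← hgx]
    exact exists_tendsto_quotient_iff_of_notMem_Dset hg (notMem_Dset_of_mem_D123 h123) f
  · exact exists_tendsto_quotient_iff_of_mem_Dset hg hxD f
  · exact ⟨_, tendsto_quotient_of_eventually_notMem_Dset hg le_rfl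
      (eventually_notMem_Dset_sFilter ha hx htx.1 h123 hacc) f⟩
  · exact eq_of_tendsto_quotient hg hL
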